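/- arXiv:2507.06152 — 2 statements merged into one kernel-verified Lean document; each statement's English description precedes it below -/
import Mathlib

section
/- (Painless hybrid filterbank) Let ψ_1,…,ψ_M satisfy ψ̂_j[k] = 1 for k ∈ [jL/d, jL/d + L/d − 1] and 0 otherwise (indices mod L), and let w_1,…,w_M ∈ ℂ^L be arbitrary. Then the hybrid filterbank {(ψ_j ∗ w_j)_{j=1}^M, ↓_d} has aliasing terms G_n ≡ 0 for all n ≥ 1, and G_0[k] = d^{−1}|ŵ_{⌊kd/L⌋}[k]|². Consequently it is a g-frame for ℂ^L if and only if min_k |ŵ_{⌊kd/L⌋}[k]| > 0, and a tight g-frame if and only if |ŵ_{⌊kd/L⌋}[k]| is a nonzero constant over all k. -/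
open scoped BigOperators

noncomputable def dft (L : ℕ) [NeZero L] (x : ZMod L → ℂ) (k : ZMod L) : ℂ :=
  (Real.sqrt L)⁻¹ * ∑ ℓ : ZMod L, x ℓ *
    Complex.exp (-(2 * Real.pi * Complex.I * (ZMod.val k : ℂ) * (ZMod.val ℓ : ℂ)) / (L : ℂ))

noncomputable def conv (L : ℕ) [NeZero L] (x w : ZMod L → ℂ) (n : ZMod L) : ℂ :=
  ∑ ℓ : ZMod L, x ℓ * w (n - ℓ)

/-!
For the ideal band-pass filters `ψ̂_j = 𝟙[band j]`, the product `ψ̂_j[k] ψ̂_j[k - nL/d]` vanishes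
for `0 < n < d`, since `k` and `k - nL/d` lie in different bands of width `L/d`; hence every
aliasing term but `G_0[k] = d⁻¹ |ŵ_{band k}[k]|²` is zero. The sampling formula for `↓_d` writes
the energy of the filterbank outputs as `L² ∑_n ∑_k x̂[k] conj (x̂[k - nL/d]) G_n[k]`, which thus
collapses to the diagonal form `(L²/d) ∑_k |ŵ_{band k}[k]|² |x̂[k]|²`. As the DFT is a unitary
bijection, the optimal frame bounds of a diagonal form are the extreme values of its weights.
-/

open Finset ComplexConjugate
open ZMod (stdAddChar)
open scoped ZMod

lemma ofReal_sqrt_mul_self (N : ℕ) : ((√N : ℝ) : ℂ) * (√N : ℝ) = N := by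
  rw [← Complex.ofReal_mul, Real.mul_self_sqrt N.cast_nonneg, Complex.ofReal_natCast]

section Fourier

variable {N : ℕ} [NeZero N]

lemma ofReal_sqrt_ne_zero : ((√N : ℝ) : ℂ) ≠ 0 := by
  simpa using NeZero.ne N

lemma dft_eq_smul_zmod_dft (x : ZMod N → ℂ) : dft N x = ((√N : ℝ) : ℂ)⁻¹ • 𝓕 x := by
  ext k
  simp only [dft, Pi.smul_apply, ZMod.dft_apply, smul_eq_mul, Complex.ofReal_inv, mul_sum]
  congr 2 with ℓ
  have : -(ℓ * k) = ((-(ℓ.val * k.val : ℤ) : ℤ) : ZMod N) := by push_cast; simp [mul_comm]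
  rw [this, ZMod.stdAddChar_coe]
  push_cast
  ring_nf

lemma dft_apply_eq_sum (x : ZMod N → ℂ) (k : ZMod N) :
    dft N x k = ((√N : ℝ) : ℂ)⁻¹ * ∑ ℓ, stdAddChar (-(ℓ * k)) * x ℓ := by
  rw [dft_eq_smul_zmod_dft]; rfl

lemma dft_surjective : Function.Surjective (dft N) := fun v => by
  refine ⟨𝓕⁻ (((√N : ℝ) : ℂ) • v), ?_⟩
  rw [dft_eq_smul_zmod_dft, LinearEquiv.apply_symm_apply, smul_smul,
    inv_mul_cancel₀ ofReal_sqrt_ne_zero, one_smul]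

lemma eq_sum_dft (x : ZMod N → ℂ) (n : ZMod N) :
    x n = ((√N : ℝ) : ℂ)⁻¹ * ∑ k, stdAddChar (k * n) * dft N x k := by
  conv_lhs => rw [← (𝓕 : (ZMod N → ℂ) ≃ₗ[ℂ] _).symm_apply_apply x, ZMod.invDFT_apply]
  simp only [dft_eq_smul_zmod_dft, Pi.smul_apply, smul_eq_mul, mul_sum]
  refine sum_congr rfl fun k _ => ?_
  rw [← ofReal_sqrt_mul_self N]
  field_simp [ofReal_sqrt_ne_zero (N := N)]

lemma sum_dft_mul_conj_dft (x z : ZMod N → ℂ) :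
    ∑ k, dft N x k * conj (dft N z k) = ∑ n, x n * conj (z n) := by
  symm
  calc ∑ n, x n * conj (z n)
      = ∑ n, x n * conj (((√N : ℝ) : ℂ)⁻¹ * ∑ k, stdAddChar (k * n) * dft N z k) := by
        simp only [← eq_sum_dft]
    _ = ∑ k, (((√N : ℝ) : ℂ)⁻¹ * ∑ n, stdAddChar (-(n * k)) * x n) * conj (dft N z k) := by
        simp only [map_mul, map_sum, map_inv₀, Complex.conj_ofReal, ← AddChar.map_neg_eq_conj,
          mul_sum, sum_mul]
        rw [sum_comm]
        refine sum_congr rfl fun k _ => sum_congr rfl fun n _ => ?_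
        rw [mul_comm k n]
        ring
    _ = ∑ k, dft N x k * conj (dft N z k) := by simp only [dft_apply_eq_sum]

lemma sum_norm_dft_sq (x : ZMod N → ℂ) : ∑ k, ‖dft N x k‖ ^ 2 = ∑ n, ‖x n‖ ^ 2 := by
  have h := sum_dft_mul_conj_dft x x
  simp only [Complex.mul_conj, Complex.normSq_eq_norm_sq] at h
  exact_mod_cast h

lemma dft_conv (x y : ZMod N → ℂ) (k : ZMod N) :
    dft N (conv N x y) k = (√N : ℝ) * dft N x k * dft N y k := by
  have hshift : ∀ ℓ, ∑ n, stdAddChar (-(n * k)) * y (n - ℓ)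
      = stdAddChar (-(ℓ * k)) * ∑ m, stdAddChar (-(m * k)) * y m := by
    intro ℓ
    rw [mul_sum]
    refine Fintype.sum_equiv (Equiv.subRight ℓ) _ _ fun n => ?_
    rw [Equiv.subRight_apply, ← mul_assoc, ← AddChar.map_add_eq_mul]
    ring_nf
  have hX : ∑ n, stdAddChar (-(n * k)) * conv N x y n
      = (∑ ℓ, stdAddChar (-(ℓ * k)) * x ℓ) * ∑ m, stdAddChar (-(m * k)) * y m := by
    calc ∑ n, stdAddChar (-(n * k)) * conv N x y n
        = ∑ ℓ, x ℓ * ∑ n, stdAddChar (-(n * k)) * y (n - ℓ) := by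
          simp only [conv, mul_sum]
          rw [sum_comm]
          exact sum_congr rfl fun ℓ _ => sum_congr rfl fun n _ => by ring
      _ = _ := by
          simp only [hshift, sum_mul]
          exact sum_congr rfl fun ℓ _ => by ring
  rw [dft_apply_eq_sum, hX, dft_apply_eq_sum, dft_apply_eq_sum]
  field_simp [ofReal_sqrt_ne_zero (N := N)]

lemma dft_stdAddChar_mul (c : ZMod N) (x : ZMod N → ℂ) (k : ZMod N) :
    dft N (fun n => stdAddChar (c * n) * x n) k = dft N x (k - c) := by
  simp only [dft_apply_eq_sum, ← mul_assoc, ← AddChar.map_add_eq_mul]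
  congr 2 with n
  ring_nf

end Fourier

section Downsampling

variable {N d : ℕ} [NeZero N]

lemma natCast_div_mul_eq_zero_iff (hdN : d ∣ N) (s : ZMod N) :
    ((N / d : ℕ) : ZMod N) * s = 0 ↔ d ∣ s.val := by
  obtain ⟨q, hN⟩ := hdN
  have hd : 0 < d := Nat.pos_of_mul_pos_right (hN ▸ Nat.pos_of_neZero N)
  have hq : 0 < q := Nat.pos_of_mul_pos_left (hN ▸ Nat.pos_of_neZero N)
  have hqd : N / d = q := by rw [hN, Nat.mul_div_cancel_left q hd]
  have hcast : ((N / d : ℕ) : ZMod N) * s = ((q * s.val : ℕ) : ZMod N) := by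
    rw [Nat.cast_mul, ZMod.natCast_zmod_val, hqd]
  rw [hcast, ZMod.natCast_eq_zero_iff]
  generalize s.val = v
  rw [hN, mul_comm d q, Nat.mul_dvd_mul_iff_left hq]

lemma sum_range_stdAddChar (hdN : d ∣ N) (s : ZMod N) :
    ∑ n ∈ range d, stdAddChar (((n * (N / d) : ℕ) : ZMod N) * s)
      = if d ∣ s.val then (d : ℂ) else 0 := by
  set ω := stdAddChar (((N / d : ℕ) : ZMod N) * s)
  have hpow : ∀ n : ℕ, stdAddChar (((n * (N / d) : ℕ) : ZMod N) * s) = ω ^ n := fun n => by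
    rw [← AddChar.map_nsmul_eq_pow, nsmul_eq_mul, Nat.cast_mul, mul_assoc]
  have hω : ω = 1 ↔ d ∣ s.val := by
    rw [← natCast_div_mul_eq_zero_iff hdN, ← AddChar.map_zero_eq_one (stdAddChar (N := N)),
      (ZMod.injective_stdAddChar (N := N)).eq_iff]
  simp only [hpow]
  split_ifs with h
  · simp [hω.2 h]
  · have hωd : ω ^ d = 1 := by
      rw [← hpow, Nat.mul_div_cancel' hdN, ZMod.natCast_self, zero_mul,
        AddChar.map_zero_eq_one]
    rw [geom_sum_eq (mt hω.1 h), hωd, sub_self, zero_div]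

lemma sum_range_comp_mul_eq_sum_filter (hdN : d ∣ N) (f : ZMod N → ℂ) :
    ∑ m ∈ range (N / d), f ((d * m : ℕ) : ZMod N) = ∑ s with d ∣ s.val, f s := by
  have hd : 0 < d := Nat.pos_of_dvd_of_pos hdN (Nat.pos_of_neZero N)
  have hdm : ∀ m ∈ range (N / d), d * m < N := fun m hm =>
    (Nat.lt_div_iff_mul_lt' hdN m).1 (mem_range.1 hm)
  refine sum_nbij' (fun m => ((d * m : ℕ) : ZMod N)) (fun s => s.val / d) ?_ ?_ ?_ ?_ ?_
  · intro m hm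
    rw [mem_filter_univ, ZMod.val_cast_of_lt (hdm m hm)]
    exact dvd_mul_right d m
  · intro s _
    exact (mem_range.2 (Nat.div_lt_div_of_lt_of_dvd hdN (ZMod.val_lt s)))
  · intro m hm
    rw [ZMod.val_cast_of_lt (hdm m hm), Nat.mul_div_cancel_left m hd]
  · intro s hs
    rw [Nat.mul_div_cancel' ((mem_filter_univ s).1 hs), ZMod.natCast_zmod_val]
  · intros; rfl

lemma natCast_mul_sum_range_comp_mul (hdN : d ∣ N) (f : ZMod N → ℂ) :
    (d : ℂ) * ∑ m ∈ range (N / d), f ((d * m : ℕ) : ZMod N)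
      = ∑ n ∈ range d, ∑ s, conj (stdAddChar (((n * (N / d) : ℕ) : ZMod N) * s)) * f s := by
  rw [sum_comm]
  simp only [← sum_mul, ← map_sum, sum_range_stdAddChar hdN]
  rw [sum_range_comp_mul_eq_sum_filter hdN, mul_sum, sum_filter]
  refine sum_congr rfl fun s _ => ?_
  split_ifs <;> simp

/-- The `n`-th term is the Plancherel pairing of `y` with its modulation by `n N/d`: sampling
at multiples of `d` folds the spectrum onto its `d` translates by multiples of `N/d`. -/
theorem sum_norm_sq_comp_mul (hdN : d ∣ N) (y : ZMod N → ℂ) :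
    ((∑ m ∈ range (N / d), ‖y ((d * m : ℕ) : ZMod N)‖ ^ 2 : ℝ) : ℂ)
      = (d : ℂ)⁻¹ * ∑ n ∈ range d, ∑ k,
          dft N y k * conj (dft N y (k - ((n * (N / d) : ℕ) : ZMod N))) := by
  have hd : (d : ℂ) ≠ 0 := Nat.cast_ne_zero.2 (ne_zero_of_dvd_ne_zero (NeZero.ne N) hdN)
  rw [eq_inv_mul_iff_mul_eq₀ hd]
  simp only [Complex.ofReal_sum, Complex.ofReal_pow, ← Complex.mul_conj']
  rw [natCast_mul_sum_range_comp_mul hdN (fun s => y s * conj (y s))]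
  refine sum_congr rfl fun n _ => ?_
  simp only [← dft_stdAddChar_mul, sum_dft_mul_conj_dft, map_mul]
  exact sum_congr rfl fun s _ => by ring

end Downsampling

section Filterbank

variable {ι : Type*} {L d : ℕ}

variable (L d) in
/-- The paper's aliasing term `G_n`, for channels `j ∈ s` with frequency responses `Φ j`. -/
noncomputable def aliasing (s : Finset ι) (Φ : ι → ZMod L → ℂ) (n : ℕ) (k : ZMod L) : ℂ :=
  (d : ℂ)⁻¹ * ∑ j ∈ s, Φ j k * conj (Φ j (k - ((n * (L / d) : ℕ) : ZMod L)))

theorem sum_sum_norm_sq_conv_comp_mul [NeZero L] (hdL : d ∣ L) (s : Finset ι)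
    (φ : ι → ZMod L → ℂ) (x : ZMod L → ℂ) :
    ((∑ j ∈ s, ∑ m ∈ range (L / d), ‖conv L x (φ j) ((d * m : ℕ) : ZMod L)‖ ^ 2 : ℝ) : ℂ)
      = L * ∑ n ∈ range d, ∑ k, dft L x k * conj (dft L x (k - ((n * (L / d) : ℕ) : ZMod L)))
          * aliasing L d s (fun j => dft L (φ j)) n k := by
  rw [Complex.ofReal_sum]
  simp only [sum_norm_sq_comp_mul hdL, dft_conv, aliasing, map_mul, Complex.conj_ofReal,
    mul_sum]
  rw [sum_comm]
  refine sum_congr rfl fun n _ => ?_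
  rw [sum_comm]
  refine sum_congr rfl fun k _ => sum_congr rfl fun j _ => ?_
  linear_combination (d : ℂ)⁻¹ * dft L x k * conj (dft L x (k - ((n * (L / d) : ℕ) : ZMod L)))
    * dft L (φ j) k * conj (dft L (φ j) (k - ((n * (L / d) : ℕ) : ZMod L)))
    * ofReal_sqrt_mul_self L

lemma aliasing_ofReal_mul (s : Finset ι) (c : ℝ) (Φ : ι → ZMod L → ℂ) (n : ℕ) (k : ZMod L) :
    aliasing L d s (fun j k => c * Φ j k) n k = (c : ℂ) ^ 2 * aliasing L d s Φ n k := by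
  simp only [aliasing, map_mul, Complex.conj_ofReal, mul_sum]
  exact sum_congr rfl fun j _ => by ring

end Filterbank

section Bands

variable {L d : ℕ} [NeZero L]

lemma pos_of_dvd_of_neZero (hdL : d ∣ L) : 0 < d :=
  Nat.pos_of_dvd_of_pos hdL (Nat.pos_of_neZero L)

lemma div_pos_of_dvd_of_neZero (hdL : d ∣ L) : 0 < L / d :=
  Nat.div_pos (Nat.le_of_dvd (Nat.pos_of_neZero L) hdL) (pos_of_dvd_of_neZero hdL)

lemma val_div_lt (hdL : d ∣ L) (k : ZMod L) : k.val / (L / d) < d := by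
  rw [Nat.div_lt_iff_lt_mul (div_pos_of_dvd_of_neZero hdL), Nat.mul_div_cancel' hdL]
  exact ZMod.val_lt k

lemma mul_div_eq_div_div (hdL : d ∣ L) (v : ℕ) : v * d / L = v / (L / d) := by
  obtain ⟨q, rfl⟩ := hdL
  have hd : 0 < d := pos_of_dvd_of_neZero ⟨q, rfl⟩
  rw [Nat.mul_div_cancel_left q hd, mul_comm v d, Nat.mul_div_mul_left v q hd]

lemma val_sub_div_ne (hdL : d ∣ L) {n : ℕ} (hn : 1 ≤ n) (hnd : n < d) (k : ZMod L) :
    (k - ((n * (L / d) : ℕ) : ZMod L)).val / (L / d) ≠ k.val / (L / d) := by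
  set q := L / d
  set u := (k - ((n * q : ℕ) : ZMod L)).val
  set v := k.val
  intro huv
  have hq : 0 < q := div_pos_of_dvd_of_neZero hdL
  have hu := Nat.div_add_mod u q
  have hv := Nat.div_add_mod v q
  have hru := Nat.mod_lt u hq
  have hrv := Nat.mod_lt v hq
  have hnq : q ≤ n * q := Nat.le_mul_of_pos_left q hn
  have hnqL : n * q + q ≤ L :=
    calc n * q + q = (n + 1) * q := by ring
      _ ≤ d * q := Nat.mul_le_mul_right q hnd
      _ = L := Nat.mul_div_cancel' hdL
  have hmod : v ≡ u + n * q [MOD L] := by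
    rw [← ZMod.natCast_eq_natCast_iff, Nat.cast_add, ZMod.natCast_zmod_val, ZMod.natCast_zmod_val,
      sub_add_cancel]
  rw [huv] at hu
  -- `u + nq - v` is a multiple of `L`, yet lies strictly between `0` and `q + nq ≤ L`
  have hdvd := (Nat.modEq_iff_dvd' (by omega)).1 hmod
  have := Nat.le_of_dvd (by omega) hdvd
  omega

end Bands

section Painless

variable {L d : ℕ} [NeZero L] {ψ : ℕ → ZMod L → ℂ}

variable (L d) in
def IsPainless (ψ : ℕ → ZMod L → ℂ) : Prop :=
  ∀ j < d, ∀ k, dft L (ψ j) k = if k.val / (L / d) = j then 1 else 0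

lemma aliasing_painless_eq_zero (hdL : d ∣ L) (hψ : IsPainless L d ψ)
    (w : ℕ → ZMod L → ℂ) {n : ℕ} (hn : 1 ≤ n) (hnd : n < d) (k : ZMod L) :
    aliasing L d (range d) (fun j k => dft L (ψ j) k * dft L (w j) k) n k = 0 := by
  refine mul_eq_zero_of_right _ (sum_eq_zero fun j hj => ?_)
  dsimp only
  rw [hψ j (mem_range.1 hj), hψ j (mem_range.1 hj)]
  split_ifs with hk hk'
  · exact absurd (hk'.trans hk.symm) (val_sub_div_ne hdL hn hnd k)
  all_goals simp

lemma aliasing_painless_zero (hdL : d ∣ L) (hψ : IsPainless L d ψ)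
    (w : ℕ → ZMod L → ℂ) (k : ZMod L) :
    aliasing L d (range d) (fun j k => dft L (ψ j) k * dft L (w j) k) 0 k
      = (d : ℂ)⁻¹ * (‖dft L (w (k.val * d / L)) k‖ : ℂ) ^ 2 := by
  simp only [aliasing, zero_mul, Nat.cast_zero, sub_zero]
  rw [sum_eq_single_of_mem _ (mem_range.2 (val_div_lt hdL k)), hψ _ (val_div_lt hdL k), if_pos rfl,
    one_mul, Complex.mul_conj', mul_div_eq_div_div hdL]
  intro j hj hjk
  rw [hψ j (mem_range.1 hj), if_neg (Ne.symm hjk), zero_mul, zero_mul]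

theorem sum_sum_norm_sq_painless (hdL : d ∣ L) (hψ : IsPainless L d ψ)
    (w : ℕ → ZMod L → ℂ) (x : ZMod L → ℂ) :
    ∑ j ∈ range d, ∑ m ∈ range (L / d), ‖conv L x (conv L (ψ j) (w j)) ((d * m : ℕ) : ZMod L)‖ ^ 2
      = ∑ k, (L ^ 2 / d * ‖dft L (w (k.val * d / L)) k‖ ^ 2) * ‖dft L x k‖ ^ 2 := by
  apply Complex.ofReal_injective
  have hresponse : (fun j => dft L (conv L (ψ j) (w j)))
      = fun j k => (√L : ℝ) * (dft L (ψ j) k * dft L (w j) k) := by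
    ext j k
    rw [dft_conv, mul_assoc]
  rw [sum_sum_norm_sq_conv_comp_mul hdL, hresponse,
    sum_eq_single_of_mem 0 (mem_range.2 (pos_of_dvd_of_neZero hdL))]
  · simp only [aliasing_ofReal_mul, aliasing_painless_zero hdL hψ, zero_mul, Nat.cast_zero,
      sub_zero, Complex.mul_conj', mul_sum, Complex.ofReal_sum]
    refine sum_congr rfl fun k _ => ?_
    rw [sq ((√L : ℝ) : ℂ), ofReal_sqrt_mul_self]
    push_cast
    ring
  · intro n hn hn0
    refine sum_eq_zero fun k _ => ?_
    rw [aliasing_ofReal_mul, aliasing_painless_eq_zero hdL hψ w (Nat.one_le_iff_ne_zero.2 hn0)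
      (mem_range.1 hn), mul_zero, mul_zero]

end Painless

lemma exists_pos_forall_mul_sq_eq_iff {ι : Type*} {C : ℝ} (hC : 0 < C) (f : ι → ℝ)
    (hf : ∀ k, 0 ≤ f k) :
    (∃ A, 0 < A ∧ ∀ k, C * f k ^ 2 = A) ↔ ∃ c, 0 < c ∧ ∀ k, f k = c := by
  constructor
  · rintro ⟨A, hA, hfA⟩
    refine ⟨√(A / C), Real.sqrt_pos.2 (div_pos hA hC), fun k => ?_⟩
    rw [← hfA k, mul_div_cancel_left₀ _ hC.ne', Real.sqrt_sq (hf k)]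
  · rintro ⟨c, hc, hfc⟩
    exact ⟨C * c ^ 2, by positivity, fun k => by rw [hfc k]⟩

section DiagonalFrame

variable {α ι : Type*} [Fintype ι] {T : α → ι → ℂ} {S E : α → ℝ} {p : ι → ℝ}

lemma exists_sum_mul_norm_sq_eq_apply (hT : Function.Surjective T) (k : ι) :
    ∃ x, ∀ q : ι → ℝ, ∑ i, q i * ‖T x i‖ ^ 2 = q k := by
  classical
  obtain ⟨x, hx⟩ := hT (Pi.single k 1)
  refine ⟨x, fun q => ?_⟩
  rw [hx, sum_eq_single k (fun i _ hik => by simp [hik]) (fun h => absurd (mem_univ k) h)]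
  simp

lemma exists_frame_bounds_iff_of_diagonal (hT : Function.Surjective T)
    (hS : ∀ x, S x = ∑ k, ‖T x k‖ ^ 2) (hE : ∀ x, E x = ∑ k, p k * ‖T x k‖ ^ 2) :
    (∃ A B : ℝ, 0 < A ∧ ∀ x, A * S x ≤ E x ∧ E x ≤ B * S x) ↔ ∀ k, 0 < p k := by
  constructor
  · rintro ⟨A, B, hA, hAB⟩ k
    obtain ⟨x, hx⟩ := exists_sum_mul_norm_sq_eq_apply hT k
    have hSx : S x = 1 := by simpa [hS] using hx fun _ => 1
    have := (hAB x).1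
    rw [hSx, hE, hx] at this
    linarith
  · intro hp
    obtain ⟨⟨A, hA⟩, hAp⟩ := Finite.exists_ge fun k => (⟨p k, hp k⟩ : {r : ℝ // 0 < r})
    obtain ⟨B, hBp⟩ := Finite.exists_le p
    refine ⟨A, B, hA, fun x => ?_⟩
    rw [hS, hE, mul_sum, mul_sum]
    exact ⟨sum_le_sum fun k _ => mul_le_mul_of_nonneg_right (hAp k) (sq_nonneg _),
      sum_le_sum fun k _ => mul_le_mul_of_nonneg_right (hBp k) (sq_nonneg _)⟩

lemma exists_tight_frame_bound_iff_of_diagonal (hT : Function.Surjective T)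
    (hS : ∀ x, S x = ∑ k, ‖T x k‖ ^ 2) (hE : ∀ x, E x = ∑ k, p k * ‖T x k‖ ^ 2) :
    (∃ A, 0 < A ∧ ∀ x, E x = A * S x) ↔ ∃ A, 0 < A ∧ ∀ k, p k = A := by
  constructor
  · rintro ⟨A, hA, hEA⟩
    refine ⟨A, hA, fun k => ?_⟩
    obtain ⟨x, hx⟩ := exists_sum_mul_norm_sq_eq_apply hT k
    have hSx : S x = 1 := by simpa [hS] using hx fun _ => 1
    rw [← hx p, ← hE, hEA, hSx, mul_one]
  · rintro ⟨A, hA, hpA⟩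
    exact ⟨A, hA, fun x => by simp only [hE, hS, hpA, mul_sum]⟩

end DiagonalFrame

theorem stmt14_general (L d : ℕ) [NeZero L] (hdL : d ∣ L)
    (ψ w : ℕ → ZMod L → ℂ)
    (hψ : ∀ j < d, ∀ k : ZMod L,
      dft L (ψ j) k = if ZMod.val k / (L / d) = j then 1 else 0)
    (G : ℕ → ZMod L → ℂ)
    (hG : ∀ n k, G n k = (d : ℂ)⁻¹ * ∑ j ∈ Finset.range d,
      (dft L (ψ j) k * dft L (w j) k) *
        (starRingEnd ℂ) (dft L (ψ j) (k - ((n * (L / d) : ℕ) : ZMod L)) *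
          dft L (w j) (k - ((n * (L / d) : ℕ) : ZMod L)))) :
    (∀ n, 1 ≤ n → n < d → ∀ k : ZMod L, G n k = 0) ∧
    (∀ k : ZMod L, G 0 k =
      (d : ℂ)⁻¹ * (‖dft L (w (ZMod.val k * d / L)) k‖ : ℂ) ^ 2) ∧
    ((∃ A B : ℝ, 0 < A ∧ ∀ x : ZMod L → ℂ,
        A * ∑ k : ZMod L, ‖x k‖ ^ 2 ≤
            (∑ j ∈ Finset.range d, ∑ m ∈ Finset.range (L / d),
              ‖conv L x (conv L (ψ j) (w j)) ((d * m : ℕ) : ZMod L)‖ ^ 2) ∧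
          (∑ j ∈ Finset.range d, ∑ m ∈ Finset.range (L / d),
              ‖conv L x (conv L (ψ j) (w j)) ((d * m : ℕ) : ZMod L)‖ ^ 2) ≤
            B * ∑ k : ZMod L, ‖x k‖ ^ 2) ↔
      (∀ k : ZMod L, 0 < ‖dft L (w (ZMod.val k * d / L)) k‖)) ∧
    ((∃ A : ℝ, 0 < A ∧ ∀ x : ZMod L → ℂ,
        (∑ j ∈ Finset.range d, ∑ m ∈ Finset.range (L / d),
            ‖conv L x (conv L (ψ j) (w j)) ((d * m : ℕ) : ZMod L)‖ ^ 2) =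
          A * ∑ k : ZMod L, ‖x k‖ ^ 2) ↔
      (∃ c : ℝ, 0 < c ∧ ∀ k : ZMod L,
        ‖dft L (w (ZMod.val k * d / L)) k‖ = c)) := by
  obtain rfl : G = aliasing L d (range d) fun j k => dft L (ψ j) k * dft L (w j) k := funext₂ hG
  have hC : (0 : ℝ) < L ^ 2 / d := div_pos (pow_pos (Nat.cast_pos.2 (Nat.pos_of_neZero L)) 2)
    (Nat.cast_pos.2 (pos_of_dvd_of_neZero hdL))
  have hS : ∀ x : ZMod L → ℂ, ∑ n, ‖x n‖ ^ 2 = ∑ k, ‖dft L x k‖ ^ 2 :=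
    fun x => (sum_norm_dft_sq x).symm
  have hE := sum_sum_norm_sq_painless hdL hψ w
  refine ⟨fun n hn hnd => aliasing_painless_eq_zero hdL hψ w hn hnd,
    aliasing_painless_zero hdL hψ w, ?_, ?_⟩
  · exact (exists_frame_bounds_iff_of_diagonal dft_surjective hS hE).trans
      (forall_congr' fun k => (mul_pos_iff_of_pos_left hC).trans
        (sq_pos_iff.trans (norm_nonneg _).lt_iff_ne'.symm))
  · exact (exists_tight_frame_bound_iff_of_diagonal dft_surjective hS hE).trans
      (exists_pos_forall_mul_sq_eq_iff hC _ fun k => norm_nonneg _)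

/-- painless hybrid filterbank: if `ψ̂_j` is the indicator of the `j`-th band
of width `L/d` (for `j = 0,…,d−1`, `M = d`), then the hybrid filterbank `{(ψ_j ∗ w_j), ↓_d}`
has aliasing terms `G_n ≡ 0` for `n ≥ 1` and `G_0[k] = d⁻¹|ŵ_{⌊kd/L⌋}[k]|²`; it is a g-frame
iff all `ŵ_{⌊kd/L⌋}[k] ≠ 0`, and a tight g-frame iff `|ŵ_{⌊kd/L⌋}[k]|` is a nonzero constant. -/
theorem stmt14 (L d : ℕ) [NeZero L] (hd : 0 < d) (hdL : d ∣ L)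
    (ψ w : ℕ → ZMod L → ℂ)
    (hψ : ∀ j < d, ∀ k : ZMod L,
      dft L (ψ j) k = if ZMod.val k / (L / d) = j then 1 else 0)
    (G : ℕ → ZMod L → ℂ)
    (hG : ∀ n k, G n k = (d : ℂ)⁻¹ * ∑ j ∈ Finset.range d,
      (dft L (ψ j) k * dft L (w j) k) *
        (starRingEnd ℂ) (dft L (ψ j) (k - ((n * (L / d) : ℕ) : ZMod L)) *
          dft L (w j) (k - ((n * (L / d) : ℕ) : ZMod L)))) :
    (∀ n, 1 ≤ n → n < d → ∀ k : ZMod L, G n k = 0) ∧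
    (∀ k : ZMod L, G 0 k =
      (d : ℂ)⁻¹ * (‖dft L (w (ZMod.val k * d / L)) k‖ : ℂ) ^ 2) ∧
    ((∃ A B : ℝ, 0 < A ∧ ∀ x : ZMod L → ℂ,
        A * ∑ k : ZMod L, ‖x k‖ ^ 2 ≤
            (∑ j ∈ Finset.range d, ∑ m ∈ Finset.range (L / d),
              ‖conv L x (conv L (ψ j) (w j)) ((d * m : ℕ) : ZMod L)‖ ^ 2) ∧
          (∑ j ∈ Finset.range d, ∑ m ∈ Finset.range (L / d),
              ‖conv L x (conv L (ψ j) (w j)) ((d * m : ℕ) : ZMod L)‖ ^ 2) ≤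
            B * ∑ k : ZMod L, ‖x k‖ ^ 2) ↔
      (∀ k : ZMod L, 0 < ‖dft L (w (ZMod.val k * d / L)) k‖)) ∧
    ((∃ A : ℝ, 0 < A ∧ ∀ x : ZMod L → ℂ,
        (∑ j ∈ Finset.range d, ∑ m ∈ Finset.range (L / d),
            ‖conv L x (conv L (ψ j) (w j)) ((d * m : ℕ) : ZMod L)‖ ^ 2) =
          A * ∑ k : ZMod L, ‖x k‖ ^ 2) ↔
      (∃ c : ℝ, 0 < c ∧ ∀ k : ZMod L,
        ‖dft L (w (ZMod.val k * d / L)) k‖ = c)) :=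
  stmt14_general L d hdL ψ w hψ G hG
end

section
/- (Expected aliasing at random initialization) If the kernels w_j[0],…,w_j[L_K−1] are i.i.d. real random variables with mean 0 and variance σ², independent across j, and w_j[n] = 0 for n ≥ L_K, then for every k, E[G_n[k]] = (σ²M/(Ld)) · Σ_{ℓ=0}^{L_K−1} e^{−2πiℓn/d}. In particular, if d | L_K then E[G_0[k]] = σ²ML_K/(Ld) and E[G_n[k]] = 0 for 1 ≤ n ≤ d−1. -/
open scoped BigOperators
open MeasureTheory ProbabilityTheory

noncomputable def aliasTerm (L d M : ℕ) [NeZero L] (w : Fin M → ZMod L → ℂ) (n : ℕ)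
    (k : ZMod L) : ℂ :=
  (d : ℂ)⁻¹ * ∑ j : Fin M, dft L (w j) k *
    (starRingEnd ℂ) (dft L (w j) (k - ((n * (L / d) : ℕ) : ZMod L)))

/-!
Write the unitary DFT as `(√L)⁻¹ • 𝓕` with Mathlib's `ZMod.dft`, whose kernel is the standard
additive character `ψ` of `ZMod L`. Then `G_n[k]` is a quadratic form in the kernel entries with
coefficients `ψ(ℓ' k' - ℓ k)`, where `k' = k - n L / d`. Independence and zero mean kill the
off-diagonal terms in expectation, and on the diagonal the coefficient is `ψ(-ℓ n L / d)`, i.e.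
`e^{-2πiℓn/d}`. If `d ∣ L_K`, the remaining sum over `ℓ < L_K` runs over whole periods of the
`d`-th root of unity `e^{-2πin/d}`, which equals `1` only for `n = 0`.
-/

open Complex Finset ComplexConjugate
open scoped ZMod

namespace ZMod

variable {N : ℕ} [NeZero N]

lemma stdAddChar_neg_natCast_mul_natCast (a b : ℕ) :
    stdAddChar (-((a : ZMod N) * (b : ZMod N))) = exp (-(2 * Real.pi * I * a * b) / N) := by
  rw [← Nat.cast_mul, ← Int.cast_natCast, ← Int.cast_neg, stdAddChar_coe]
  push_cast
  ring_nf

lemma stdAddChar_neg_mul (ℓ k : ZMod N) :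
    stdAddChar (-(ℓ * k)) = exp (-(2 * Real.pi * I * ℓ.val * k.val) / N) := by
  rw [← stdAddChar_neg_natCast_mul_natCast, natCast_zmod_val, natCast_zmod_val]

lemma stdAddChar_neg_mul_natCast_mul_div {d : ℕ} (hdN : d ∣ N) (n : ℕ) (ℓ : ZMod N) :
    stdAddChar (-(ℓ * ((n * (N / d) : ℕ) : ZMod N))) =
      exp (-(2 * Real.pi * I * ℓ.val * n) / d) := by
  obtain ⟨e, rfl⟩ := hdN
  have hd : d ≠ 0 := left_ne_zero_of_mul (NeZero.ne (d * e))
  have he : (e : ℂ) ≠ 0 := Nat.cast_ne_zero.2 (right_ne_zero_of_mul (NeZero.ne (d * e)))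
  conv_lhs => rw [← natCast_zmod_val ℓ, stdAddChar_neg_natCast_mul_natCast,
    Nat.mul_div_cancel_left _ (Nat.pos_of_ne_zero hd)]
  push_cast
  field_simp

lemma conj_stdAddChar (a : ZMod N) : conj (stdAddChar a) = stdAddChar (-a) := by
  rw [AddChar.map_neg_eq_inv, stdAddChar_apply, ← Circle.coe_inv_eq_conj, Circle.coe_inv]

lemma dft_mul_conj_dft (x : ZMod N → ℂ) (k k' : ZMod N) :
    𝓕 x k * conj (𝓕 x k') =
      ∑ ℓ, ∑ ℓ', stdAddChar (ℓ' * k' - ℓ * k) * (x ℓ * conj (x ℓ')) := by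
  simp only [dft_apply, smul_eq_mul, map_sum, map_mul, sum_mul_sum]
  refine sum_congr rfl fun ℓ _ => sum_congr rfl fun ℓ' _ => ?_
  rw [conj_stdAddChar, neg_neg, sub_eq_add_neg, add_comm, AddChar.map_add_eq_mul]
  ring

lemma sum_ite_val_lt {M : Type*} [AddCommMonoid M] {K : ℕ} (hKN : K ≤ N) (f : ℕ → M) :
    ∑ ℓ : ZMod N, (if ℓ.val < K then f ℓ.val else 0) = ∑ m ∈ range K, f m := by
  rw [← sum_filter]
  have hmod : ∀ m < K, m % N = m := fun m hm => Nat.mod_eq_of_lt (hm.trans_le hKN)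
  refine sum_nbij' val Nat.cast ?_ ?_ ?_ ?_ ?_ <;> simp
  · exact fun m hm => (hmod m hm).symm ▸ hm
  · exact hmod

section Moments

variable {Ω : Type*} [MeasurableSpace Ω] {μ : Measure Ω} {x : Ω → ZMod N → ℂ}

lemma integrable_dft_mul_conj_dft (hint : ∀ ℓ ℓ', Integrable (fun ω => x ω ℓ * conj (x ω ℓ')) μ)
    (k k' : ZMod N) : Integrable (fun ω => 𝓕 (x ω) k * conj (𝓕 (x ω) k')) μ := by
  simp_rw [dft_mul_conj_dft]
  exact integrable_finsetSum _ fun ℓ _ => integrable_finsetSum _ fun ℓ' _ =>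
    (hint ℓ ℓ').const_mul _

lemma integral_dft_mul_conj_dft {c : ZMod N → ℂ}
    (hint : ∀ ℓ ℓ', Integrable (fun ω => x ω ℓ * conj (x ω ℓ')) μ)
    (hcov : ∀ ℓ ℓ', ∫ ω, x ω ℓ * conj (x ω ℓ') ∂μ = if ℓ = ℓ' then c ℓ else 0)
    (k k' : ZMod N) :
    ∫ ω, 𝓕 (x ω) k * conj (𝓕 (x ω) k') ∂μ = ∑ ℓ, c ℓ * stdAddChar (-(ℓ * (k - k'))) := by
  simp_rw [dft_mul_conj_dft]
  rw [integral_finsetSum _ fun ℓ _ => integrable_finsetSum _ fun ℓ' _ =>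
    (hint ℓ ℓ').const_mul _]
  refine sum_congr rfl fun ℓ _ => ?_
  rw [integral_finsetSum _ fun ℓ' _ => (hint ℓ ℓ').const_mul _]
  simp_rw [integral_const_mul, hcov, mul_ite, mul_zero, sum_ite_eq, mem_univ, if_true]
  rw [mul_comm]
  congr 2
  ring

end Moments

end ZMod

lemma dft_eq_inv_sqrt_mul_dft {L : ℕ} [NeZero L] (x : ZMod L → ℂ) (k : ZMod L) :
    dft L x k = (Real.sqrt L)⁻¹ * 𝓕 x k := by
  simp only [dft, ZMod.dft_apply, ZMod.stdAddChar_neg_mul, smul_eq_mul]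
  congr 1
  refine sum_congr rfl fun ℓ _ => ?_
  ring_nf

lemma aliasTerm_eq (L d M : ℕ) [NeZero L] (w : Fin M → ZMod L → ℂ) (n : ℕ) (k : ZMod L) :
    aliasTerm L d M w n k = ((d : ℂ) * L)⁻¹ *
      ∑ j, 𝓕 (w j) k * conj (𝓕 (w j) (k - ((n * (L / d) : ℕ) : ZMod L))) := by
  have hsqrt : (((Real.sqrt L)⁻¹ : ℝ) : ℂ) * (((Real.sqrt L)⁻¹ : ℝ) : ℂ) = (L : ℂ)⁻¹ := by
    rw [← ofReal_mul, ← mul_inv, Real.mul_self_sqrt (Nat.cast_nonneg L)]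
    push_cast
    rfl
  simp only [aliasTerm, dft_eq_inv_sqrt_mul_dft, map_mul, conj_ofReal, mul_sum]
  refine sum_congr rfl fun j _ => ?_
  rw [mul_inv, ← hsqrt]
  push_cast
  ring

lemma sum_range_exp_neg_eq_zero {d n N : ℕ} (hdN : d ∣ N) (hdn : ¬ d ∣ n) :
    ∑ ℓ ∈ range N, exp (-(2 * Real.pi * I * ℓ * n) / d) = 0 := by
  obtain rfl | hd := eq_or_ne d 0
  · simp [zero_dvd_iff.1 hdN]
  have hζ := isPrimitiveRoot_exp d hd
  have hz : ∀ ℓ : ℕ, exp (-(2 * Real.pi * I * ℓ * n) / d) =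
      ((exp (2 * Real.pi * I / d) ^ n)⁻¹) ^ ℓ := by
    intro ℓ
    rw [← exp_nat_mul, ← exp_neg, ← exp_nat_mul]
    ring_nf
  have hz1 : (exp (2 * Real.pi * I / d) ^ n)⁻¹ ≠ 1 := by
    rwa [Ne, inv_eq_one, hζ.pow_eq_one_iff_dvd]
  have hzN : ((exp (2 * Real.pi * I / d) ^ n)⁻¹) ^ N = 1 := by
    rw [inv_pow, ← pow_mul, inv_eq_one, hζ.pow_eq_one_iff_dvd]
    exact hdN.mul_left n
  simp_rw [hz, geom_sum_eq hz1, hzN, sub_self, zero_div]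

lemma mul_conj_eq_of_zeroPad {Ω : Type*} {L K : ℕ} {X : Fin K → Ω → ℝ} {x : Ω → ZMod L → ℂ}
    (hx : ∀ ω ℓ, x ω ℓ = if h : ℓ.val < K then (X ⟨ℓ.val, h⟩ ω : ℂ) else 0)
    (ω : Ω) (ℓ ℓ' : ZMod L) :
    x ω ℓ * conj (x ω ℓ') = if h : ℓ.val < K ∧ ℓ'.val < K then
      ((X ⟨ℓ.val, h.1⟩ ω * X ⟨ℓ'.val, h.2⟩ ω : ℝ) : ℂ) else 0 := by
  rw [hx, hx]
  by_cases h : ℓ.val < K ∧ ℓ'.val < K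
  · simp [h]
  · rcases not_and_or.1 h with h | h <;> simp [h]

section Expectation

variable {Ω : Type*} [MeasurableSpace Ω] {μ : Measure Ω}

lemma integral_mul_eq_ite_of_iIndepFun {ι : Type*} [DecidableEq ι] {X : ι → Ω → ℝ} {σ : ℝ}
    (hindep : iIndepFun X μ) (hL2 : ∀ i, MemLp (X i) 2 μ)
    (hmean : ∀ i, ∫ ω, X i ω ∂μ = 0) (hvar : ∀ i, ∫ ω, X i ω ^ 2 ∂μ = σ ^ 2) (i i' : ι) :
    ∫ ω, X i ω * X i' ω ∂μ = if i = i' then σ ^ 2 else 0 := by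
  split_ifs with h
  · subst h
    simp_rw [← sq, hvar]
  · simpa [hmean] using (hindep.indepFun h).integral_mul_eq_mul_integral (hL2 i).1 (hL2 i').1

section ZeroPadding

variable {L K : ℕ} {X : Fin K → Ω → ℝ} {x : Ω → ZMod L → ℂ}

lemma integrable_mul_conj_of_zeroPad
    (hint : ∀ i i', Integrable (fun ω => X i ω * X i' ω) μ)
    (hx : ∀ ω ℓ, x ω ℓ = if h : ℓ.val < K then (X ⟨ℓ.val, h⟩ ω : ℂ) else 0)
    (ℓ ℓ' : ZMod L) : Integrable (fun ω => x ω ℓ * conj (x ω ℓ')) μ := by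
  simp_rw [mul_conj_eq_of_zeroPad hx]
  split_ifs
  · exact (hint _ _).ofReal
  · exact integrable_zero _ _ _

lemma integral_mul_conj_of_zeroPad [NeZero L] {σ : ℝ}
    (hcov : ∀ i i', ∫ ω, X i ω * X i' ω ∂μ = if i = i' then σ ^ 2 else 0)
    (hx : ∀ ω ℓ, x ω ℓ = if h : ℓ.val < K then (X ⟨ℓ.val, h⟩ ω : ℂ) else 0)
    (ℓ ℓ' : ZMod L) :
    ∫ ω, x ω ℓ * conj (x ω ℓ') ∂μ =
      if ℓ = ℓ' then (if ℓ.val < K then ((σ ^ 2 : ℝ) : ℂ) else 0) else 0 := by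
  simp_rw [mul_conj_eq_of_zeroPad hx]
  by_cases h : ℓ.val < K ∧ ℓ'.val < K
  · simp only [dif_pos h]
    rw [integral_complex_ofReal, hcov]
    by_cases hℓ : ℓ = ℓ'
    · subst hℓ
      simp [h.1]
    · simp [hℓ, (ZMod.val_injective L).eq_iff]
  · simp only [dif_neg h, integral_zero]
    grind

end ZeroPadding

lemma integral_aliasTerm {L d M : ℕ} [NeZero L] (hdL : d ∣ L) {w : Ω → Fin M → ZMod L → ℂ}
    {c : ZMod L → ℂ} (hint : ∀ j ℓ ℓ', Integrable (fun ω => w ω j ℓ * conj (w ω j ℓ')) μ)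
    (hcov : ∀ j ℓ ℓ', ∫ ω, w ω j ℓ * conj (w ω j ℓ') ∂μ = if ℓ = ℓ' then c ℓ else 0)
    (n : ℕ) (k : ZMod L) :
    ∫ ω, aliasTerm L d M (w ω) n k ∂μ =
      M / (d * L) * ∑ ℓ, c ℓ * exp (-(2 * Real.pi * I * ℓ.val * n) / d) := by
  simp_rw [aliasTerm_eq]
  rw [integral_const_mul,
    integral_finsetSum _ fun j _ => ZMod.integrable_dft_mul_conj_dft (hint j) _ _]
  simp_rw [ZMod.integral_dft_mul_conj_dft (hint _) (hcov _), sub_sub_cancel,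
    ZMod.stdAddChar_neg_mul_natCast_mul_div hdL, sum_const, card_univ, Fintype.card_fin,
    nsmul_eq_mul]
  ring

end Expectation

theorem stmt15_general {Ω : Type*} [MeasurableSpace Ω] (μ : Measure Ω)
    (L d M LK : ℕ) [NeZero L] (hdL : d ∣ L) (hLKL : LK ≤ L)
    (σ : ℝ)
    (W : Fin M × Fin LK → Ω → ℝ)
    (hindep : iIndepFun W μ)
    (hL2 : ∀ p, MemLp (W p) 2 μ)
    (hmean : ∀ p, ∫ ω, W p ω ∂μ = 0)
    (hvar : ∀ p, ∫ ω, (W p ω) ^ 2 ∂μ = σ ^ 2)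
    (w : Ω → Fin M → ZMod L → ℂ)
    (hw : ∀ ω j (n : ZMod L),
      w ω j n = if h : ZMod.val n < LK then (W (j, ⟨ZMod.val n, h⟩) ω : ℂ) else 0)
    (n : ℕ) (hn : n < d) (k : ZMod L) :
    (∫ ω, aliasTerm L d M (w ω) n k ∂μ =
      ((σ ^ 2 * M / (L * d) : ℝ) : ℂ) * ∑ ℓ ∈ Finset.range LK,
        Complex.exp (-(2 * Real.pi * Complex.I * ℓ * n) / (d : ℂ))) ∧
    (d ∣ LK →
      (n = 0 → ∫ ω, aliasTerm L d M (w ω) n k ∂μ = ((σ ^ 2 * M * LK / (L * d) : ℝ) : ℂ)) ∧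
      (1 ≤ n → ∫ ω, aliasTerm L d M (w ω) n k ∂μ = 0)) := by
  have hcovW := integral_mul_eq_ite_of_iIndepFun hindep hL2 hmean hvar
  have hint : ∀ j ℓ ℓ', Integrable (fun ω => w ω j ℓ * conj (w ω j ℓ')) μ := fun j =>
    integrable_mul_conj_of_zeroPad (fun i i' => (hL2 (j, i)).integrable_mul (hL2 (j, i')))
      (hw · j)
  have hcov := fun j => integral_mul_conj_of_zeroPad (μ := μ)
    (fun i i' => by simpa using hcovW (j, i) (j, i')) (hw · j)
  have hmain : ∫ ω, aliasTerm L d M (w ω) n k ∂μ =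
      ((σ ^ 2 * M / (L * d) : ℝ) : ℂ) * ∑ ℓ ∈ range LK,
        exp (-(2 * Real.pi * I * ℓ * n) / d) := by
    rw [integral_aliasTerm hdL hint hcov]
    simp_rw [ite_mul, zero_mul]
    rw [ZMod.sum_ite_val_lt hLKL
      fun m => ((σ ^ 2 : ℝ) : ℂ) * exp (-(2 * Real.pi * I * m * n) / d), ← mul_sum]
    push_cast
    ring
  refine ⟨hmain, fun hdLK => ⟨fun hn0 => ?_, fun hn1 => ?_⟩⟩
  · subst hn0
    rw [hmain]
    simp only [CharP.cast_eq_zero, mul_zero, neg_zero, zero_div, exp_zero, sum_const, card_range,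
      nsmul_eq_mul, mul_one]
    push_cast
    ring
  · rw [hmain, sum_range_exp_neg_eq_zero hdLK (Nat.not_dvd_of_pos_of_lt hn1 hn), mul_zero]

/-- expected aliasing at random initialization: for kernels with i.i.d.
entries of mean `0` and variance `σ²` (zero beyond the kernel), for every `k`,
`E[G_n[k]] = (σ²M/(Ld))·Σ_{ℓ=0}^{L_K−1} e^{−2πiℓn/d}`; in particular if `d ∣ L_K`, then
`E[G_0[k]] = σ²ML_K/(Ld)` and `E[G_n[k]] = 0` for `1 ≤ n ≤ d−1`. -/
theorem stmt15 {Ω : Type*} [MeasurableSpace Ω] (μ : Measure Ω) [IsProbabilityMeasure μ]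
    (L d M LK : ℕ) [NeZero L] (hd : 0 < d) (hdL : d ∣ L) (hLK : 0 < LK) (hLKL : LK ≤ L)
    (σ : ℝ) (hσ : 0 < σ)
    (W : Fin M × Fin LK → Ω → ℝ)
    (hmeas : ∀ p, Measurable (W p))
    (hindep : iIndepFun W μ)
    (hL2 : ∀ p, MemLp (W p) 2 μ)
    (hmean : ∀ p, ∫ ω, W p ω ∂μ = 0)
    (hvar : ∀ p, ∫ ω, (W p ω) ^ 2 ∂μ = σ ^ 2)
    (w : Ω → Fin M → ZMod L → ℂ)
    (hw : ∀ ω j (n : ZMod L),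
      w ω j n = if h : ZMod.val n < LK then (W (j, ⟨ZMod.val n, h⟩) ω : ℂ) else 0)
    (n : ℕ) (hn : n < d) (k : ZMod L) :
    (∫ ω, aliasTerm L d M (w ω) n k ∂μ =
      ((σ ^ 2 * M / (L * d) : ℝ) : ℂ) * ∑ ℓ ∈ Finset.range LK,
        Complex.exp (-(2 * Real.pi * Complex.I * ℓ * n) / (d : ℂ))) ∧
    (d ∣ LK →
      (n = 0 → ∫ ω, aliasTerm L d M (w ω) n k ∂μ = ((σ ^ 2 * M * LK / (L * d) : ℝ) : ℂ)) ∧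
      (1 ≤ n → ∫ ω, aliasTerm L d M (w ω) n k ∂μ = 0)) :=
  stmt15_general μ L d M LK hdL hLKL σ W hindep hL2 hmean hvar w hw n hn k
end
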